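/- arXiv:2006.01985 — 2 statements merged into one kernel-verified Lean document; each statement's English description precedes it below -/
import Mathlib

section
/- Consider the finite-horizon LTV system x'(t)=A(t)x(t)+B(t)d(t), e_I(t)=C_I(t)x(t)+D_I(t)d(t), e_E(t)=C_E(t)x(t) on [0,T], and let γ>0. Define Q(t):=C_I(t)ᵀC_I(t), S(t):=C_I(t)ᵀD_I(t), R(t):=D_I(t)ᵀD_I(t)−γ²I, and F:=C_E(T)ᵀC_E(T). Suppose R(t) is negative definite for all t∈[0,T] and there exists a continuously differentiable symmetric-matrix-valued P:[0,T]→S^{n_x} with P(T)=F satisfying P'(t)+A(t)ᵀP(t)+P(t)A(t)+Q(t)−(P(t)B(t)+S(t))R(t)⁻¹(P(t)B(t)+S(t))ᵀ=0 for all t∈[0,T]. Then for every continuous disturbance d:[0,T]→ℝ^{n_d} and every trajectory x with x(0)=0, the performance bound ‖e_E(T)‖² + ∫₀ᵀ‖e_I(t)‖² dt ≤ γ² ∫₀ᵀ‖d(t)‖² dt holds. -/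
/-!
`V(t) = x(t) ⬝ᵥ P(t) x(t)` is a storage function. Along a trajectory, completing the square in
the disturbance with respect to `R(t) ≺ 0` and then using the Riccati equation gives
`V' = γ²‖d‖² - ‖e_I‖² + w ⬝ᵥ R w ≤ γ²‖d‖² - ‖e_I‖²` with `w = d + R⁻¹ (P B + S)ᵀ x`.
Integrating over `[0, T]`, with `V(0) = 0` and `V(T) = ‖e_E(T)‖²`, gives the bound.
-/

open Matrix Set

section Continuity

variable {X R m n : Type*} [TopologicalSpace X] [TopologicalSpace R] {s : Set X}

theorem continuousOn_matrix {A : X → Matrix m n R}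
    (hA : ∀ i j, ContinuousOn (fun x => A x i j) s) : ContinuousOn A s :=
  continuousOn_pi.2 fun i => continuousOn_pi.2 (hA i)

variable [Fintype n] [NonUnitalNonAssocSemiring R] [ContinuousAdd R] [ContinuousMul R]

theorem ContinuousOn.dotProduct {u v : X → n → R} (hu : ContinuousOn u s)
    (hv : ContinuousOn v s) : ContinuousOn (fun x => u x ⬝ᵥ v x) s :=
  continuousOn_iff_continuous_domRestrict.2 (hu.domRestrict.dotProduct hv.domRestrict)

theorem ContinuousOn.matrix_mulVec {A : X → Matrix m n R} {v : X → n → R}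
    (hA : ContinuousOn A s) (hv : ContinuousOn v s) : ContinuousOn (fun x => A x *ᵥ v x) s :=
  continuousOn_iff_continuous_domRestrict.2 (hA.domRestrict.matrix_mulVec hv.domRestrict)

end Continuity

theorem HasDerivAt.dotProduct_mulVec {n : Type*} [Fintype n] {P : ℝ → Matrix n n ℝ}
    {P' : Matrix n n ℝ} {x : ℝ → n → ℝ} {x' : n → ℝ} {t : ℝ}
    (hP : ∀ i j, HasDerivAt (fun s => P s i j) (P' i j) t)
    (hx : ∀ i, HasDerivAt (fun s => x s i) (x' i) t) :
    HasDerivAt (fun s => x s ⬝ᵥ (P s *ᵥ x s))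
      (x' ⬝ᵥ (P t *ᵥ x t) + x t ⬝ᵥ (P' *ᵥ x t) + x t ⬝ᵥ (P t *ᵥ x')) t := by
  have hsum := HasDerivAt.fun_sum fun i (_ : i ∈ Finset.univ) =>
    (hx i).mul (HasDerivAt.fun_sum fun j (_ : j ∈ Finset.univ) => (hP i j).mul (hx j))
  refine hsum.congr_deriv ?_
  simp only [dotProduct, mulVec, Pi.mul_apply, mul_add, Finset.sum_add_distrib, Finset.mul_sum]
  ring

namespace Matrix

section CommRing

variable {l m n 𝕜 : Type*} [Fintype l] [Fintype m] [Fintype n] [CommRing 𝕜]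

theorem mulVec_dotProduct_mulVec (M : Matrix l m 𝕜) (N : Matrix l n 𝕜) (v : m → 𝕜)
    (w : n → 𝕜) : (M *ᵥ v) ⬝ᵥ (N *ᵥ w) = v ⬝ᵥ ((Mᵀ * N) *ᵥ w) := by
  rw [dotProduct_mulVec, dotProduct_mulVec, vecMul_mulVec]

theorem dotProduct_mulVec_comm_of_transpose_eq {R : Matrix n n 𝕜} (hR : Rᵀ = R)
    (u v : n → 𝕜) : u ⬝ᵥ (R *ᵥ v) = (R *ᵥ u) ⬝ᵥ v := by
  rw [dotProduct_mulVec, ← mulVec_transpose, hR]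

theorem quadForm_eq_completeSquare [DecidableEq n] {R : Matrix n n 𝕜} (hR : Rᵀ = R)
    (hdet : IsUnit R.det) (M : Matrix m m 𝕜) (L : Matrix m n 𝕜) (x : m → 𝕜) (d : n → 𝕜) :
    x ⬝ᵥ (M *ᵥ x) + 2 * (x ⬝ᵥ (L *ᵥ d)) + d ⬝ᵥ (R *ᵥ d) =
      x ⬝ᵥ ((M - L * R⁻¹ * Lᵀ) *ᵥ x) +
        (d + (R⁻¹ * Lᵀ) *ᵥ x) ⬝ᵥ (R *ᵥ (d + (R⁻¹ * Lᵀ) *ᵥ x)) := by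
  have hRK : R *ᵥ ((R⁻¹ * Lᵀ) *ᵥ x) = Lᵀ *ᵥ x := by
    rw [mulVec_mulVec, ← Matrix.mul_assoc, mul_nonsing_inv R hdet, Matrix.one_mul]
  have hcross : (Lᵀ *ᵥ x) ⬝ᵥ d = x ⬝ᵥ (L *ᵥ d) := by
    rw [dotProduct_comm, dotProduct_mulVec, vecMul_transpose, dotProduct_comm]
  have hschur : (Lᵀ *ᵥ x) ⬝ᵥ ((R⁻¹ * Lᵀ) *ᵥ x) = x ⬝ᵥ ((L * R⁻¹ * Lᵀ) *ᵥ x) := by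
    rw [mulVec_dotProduct_mulVec, transpose_transpose, Matrix.mul_assoc]
  rw [mulVec_add, dotProduct_add, add_dotProduct, add_dotProduct, hRK,
    dotProduct_mulVec_comm_of_transpose_eq hR ((R⁻¹ * Lᵀ) *ᵥ x) d, hRK,
    dotProduct_comm d (Lᵀ *ᵥ x), hcross, dotProduct_comm ((R⁻¹ * Lᵀ) *ᵥ x), hschur,
    sub_mulVec, dotProduct_sub]
  ring

theorem riccati_storageRate_add_outputNorm_eq (a p p' : Matrix m m 𝕜) (b : Matrix m n 𝕜)
    (c : Matrix l m 𝕜) (e : Matrix l n 𝕜) (hp : pᵀ = p) (x : m → 𝕜) (d : n → 𝕜) :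
    (a *ᵥ x + b *ᵥ d) ⬝ᵥ (p *ᵥ x) + x ⬝ᵥ (p' *ᵥ x) + x ⬝ᵥ (p *ᵥ (a *ᵥ x + b *ᵥ d)) +
        (c *ᵥ x + e *ᵥ d) ⬝ᵥ (c *ᵥ x + e *ᵥ d) =
      x ⬝ᵥ ((p' + aᵀ * p + p * a + cᵀ * c) *ᵥ x) + 2 * (x ⬝ᵥ ((p * b + cᵀ * e) *ᵥ d)) +
        d ⬝ᵥ ((eᵀ * e) *ᵥ d) := by
  have hpb : (b *ᵥ d) ⬝ᵥ (p *ᵥ x) = x ⬝ᵥ ((p * b) *ᵥ d) := by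
    rw [dotProduct_comm, mulVec_dotProduct_mulVec, hp]
  have hce : (e *ᵥ d) ⬝ᵥ (c *ᵥ x) = x ⬝ᵥ ((cᵀ * e) *ᵥ d) := by
    rw [dotProduct_comm, mulVec_dotProduct_mulVec]
  simp only [add_mulVec, mulVec_add, dotProduct_add, add_dotProduct, hpb, hce,
    mulVec_dotProduct_mulVec a p, mulVec_dotProduct_mulVec c, mulVec_dotProduct_mulVec e e,
    mulVec_mulVec]
  ring

end CommRing

section OrderedField

variable {l m n K : Type*} [Fintype l] [Fintype m] [Fintype n] [DecidableEq n]
  [Field K] [LinearOrder K]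

theorem isUnit_det_of_dotProduct_mulVec_neg {R : Matrix n n K}
    (hR : ∀ v : n → K, v ≠ 0 → v ⬝ᵥ (R *ᵥ v) < 0) : IsUnit R.det := by
  refine isUnit_iff_ne_zero.2 fun hdet => ?_
  obtain ⟨v, hv, hRv⟩ := exists_mulVec_eq_zero_iff.2 hdet
  simpa [hRv] using hR v hv

theorem riccati_dissipation_le [IsStrictOrderedRing K] {a p p' : Matrix m m K} {b : Matrix m n K} {c : Matrix l m K}
    {e : Matrix l n K} {γ : K} (hp : pᵀ = p)
    (hR : ∀ v : n → K, v ≠ 0 → v ⬝ᵥ ((eᵀ * e - γ ^ 2 • (1 : Matrix n n K)) *ᵥ v) < 0)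
    (hRDE : p' + aᵀ * p + p * a + cᵀ * c -
      (p * b + cᵀ * e) * (eᵀ * e - γ ^ 2 • (1 : Matrix n n K))⁻¹ * (p * b + cᵀ * e)ᵀ = 0)
    (x : m → K) (d : n → K) :
    (a *ᵥ x + b *ᵥ d) ⬝ᵥ (p *ᵥ x) + x ⬝ᵥ (p' *ᵥ x) + x ⬝ᵥ (p *ᵥ (a *ᵥ x + b *ᵥ d)) ≤
      γ ^ 2 * (d ⬝ᵥ d) - (c *ᵥ x + e *ᵥ d) ⬝ᵥ (c *ᵥ x + e *ᵥ d) := by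
  set R := eᵀ * e - γ ^ 2 • (1 : Matrix n n K) with hRdef
  have hRsymm : Rᵀ = R := by
    rw [hRdef, transpose_sub, transpose_mul, transpose_transpose, transpose_smul, transpose_one]
  have hsq := quadForm_eq_completeSquare hRsymm (isUnit_det_of_dotProduct_mulVec_neg hR)
    (p' + aᵀ * p + p * a + cᵀ * c) (p * b + cᵀ * e) x d
  rw [hRDE, zero_mulVec, dotProduct_zero, zero_add] at hsq
  set w := d + (R⁻¹ * (p * b + cᵀ * e)ᵀ) *ᵥ x
  have hw : w ⬝ᵥ (R *ᵥ w) ≤ 0 := by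
    rcases eq_or_ne w 0 with hw0 | hw0
    · simp [hw0]
    · exact (hR w hw0).le
  have hRd : d ⬝ᵥ (R *ᵥ d) = d ⬝ᵥ ((eᵀ * e) *ᵥ d) - γ ^ 2 * (d ⬝ᵥ d) := by
    rw [hRdef, sub_mulVec, dotProduct_sub, smul_mulVec, one_mulVec, dotProduct_smul, smul_eq_mul]
  linarith [riccati_storageRate_add_outputNorm_eq a p p' b c e hp x d]

end OrderedField

end Matrix

theorem RDE_implies_finite_horizon_performance_general
    {nx nd nI nE : ℕ} {T : ℝ} (hT : 0 < T)
    (A : ℝ → Matrix (Fin nx) (Fin nx) ℝ)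
    (B : ℝ → Matrix (Fin nx) (Fin nd) ℝ)
    (CI : ℝ → Matrix (Fin nI) (Fin nx) ℝ)
    (DI : ℝ → Matrix (Fin nI) (Fin nd) ℝ)
    (CE : ℝ → Matrix (Fin nE) (Fin nx) ℝ)
    (hCI : ∀ i j, ContinuousOn (fun t => CI t i j) (Icc 0 T))
    (hDI : ∀ i j, ContinuousOn (fun t => DI t i j) (Icc 0 T))
    (γ : ℝ)
    -- R(t) ≺ 0 on [0,T]
    (hR : ∀ t ∈ Icc (0:ℝ) T, ∀ v : Fin nd → ℝ, v ≠ 0 →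
      v ⬝ᵥ (((DI t)ᵀ * DI t - γ ^ 2 • (1 : Matrix (Fin nd) (Fin nd) ℝ)) *ᵥ v) < 0)
    -- continuously differentiable symmetric P solving the RDE with P(T) = F
    (P P' : ℝ → Matrix (Fin nx) (Fin nx) ℝ)
    (hPsym : ∀ t ∈ Icc (0:ℝ) T, (P t)ᵀ = P t)
    (hPderiv : ∀ t ∈ Icc (0:ℝ) T, ∀ i j, HasDerivAt (fun s => P s i j) (P' t i j) t)
    (hPT : P T = (CE T)ᵀ * CE T)
    (hRDE : ∀ t ∈ Icc (0:ℝ) T,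
      P' t + (A t)ᵀ * P t + P t * A t + (CI t)ᵀ * CI t -
        (P t * B t + (CI t)ᵀ * DI t) *
          ((DI t)ᵀ * DI t - γ ^ 2 • (1 : Matrix (Fin nd) (Fin nd) ℝ))⁻¹ *
        (P t * B t + (CI t)ᵀ * DI t)ᵀ = 0) :
    ∀ (d : ℝ → Fin nd → ℝ) (x : ℝ → Fin nx → ℝ),
      (∀ i, ContinuousOn (fun t => d t i) (Icc 0 T)) →
      x 0 = 0 →
      (∀ t ∈ Icc (0:ℝ) T, ∀ i,
        HasDerivAt (fun s => x s i) ((A t *ᵥ x t + B t *ᵥ d t) i) t) →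
      (CE T *ᵥ x T) ⬝ᵥ (CE T *ᵥ x T) +
        (∫ t in (0:ℝ)..T,
          (CI t *ᵥ x t + DI t *ᵥ d t) ⬝ᵥ (CI t *ᵥ x t + DI t *ᵥ d t)) ≤
      γ ^ 2 * ∫ t in (0:ℝ)..T, (d t) ⬝ᵥ (d t) := by
  intro d x hd hx0 hx
  have hxc : ContinuousOn x (Icc 0 T) :=
    continuousOn_pi.2 fun i t ht => (hx t ht i).continuousAt.continuousWithinAt
  have hdc : ContinuousOn d (Icc 0 T) := continuousOn_pi.2 hd
  have hPc : ContinuousOn P (Icc 0 T) :=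
    continuousOn_matrix fun i j t ht => (hPderiv t ht i j).continuousAt.continuousWithinAt
  have hec : ContinuousOn (fun t => CI t *ᵥ x t + DI t *ᵥ d t) (Icc 0 T) :=
    ((continuousOn_matrix hCI).matrix_mulVec hxc).add
      ((continuousOn_matrix hDI).matrix_mulVec hdc)
  have hdd := hdc.dotProduct hdc
  have hee := hec.dotProduct hec
  have hsupply : ContinuousOn (fun t => γ ^ 2 * (d t ⬝ᵥ d t) -
      (CI t *ᵥ x t + DI t *ᵥ d t) ⬝ᵥ (CI t *ᵥ x t + DI t *ᵥ d t)) (Icc 0 T) :=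
    (continuousOn_const.mul hdd).sub hee
  have hstorage := intervalIntegral.sub_le_integral_of_hasDeriv_right_of_le hT.le
    (hxc.dotProduct (hPc.matrix_mulVec hxc))
    (fun t ht => (HasDerivAt.dotProduct_mulVec (hPderiv t (Ioo_subset_Icc_self ht))
      (hx t (Ioo_subset_Icc_self ht))).hasDerivWithinAt)
    hsupply.integrableOn_Icc
    (fun t ht => riccati_dissipation_le (hPsym t (Ioo_subset_Icc_self ht))
      (hR t (Ioo_subset_Icc_self ht)) (hRDE t (Ioo_subset_Icc_self ht)) (x t) (d t))
  rw [intervalIntegral.integral_sub ((hdd.intervalIntegrable_of_Icc hT.le).const_mul _)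
      (hee.intervalIntegrable_of_Icc hT.le), intervalIntegral.integral_const_mul, hx0, hPT,
    ← mulVec_dotProduct_mulVec, zero_dotProduct] at hstorage
  linarith

/-- If the Riccati Differential Equation has a solution with terminal
condition `P(T) = C_E(T)ᵀ C_E(T)` and `R(t) ≺ 0` on `[0,T]`, then the finite-horizon
performance bound with gain `γ` holds for every trajectory starting at `x(0)=0`. -/
theorem RDE_implies_finite_horizon_performance
    {nx nd nI nE : ℕ} {T : ℝ} (hT : 0 < T)
    (A : ℝ → Matrix (Fin nx) (Fin nx) ℝ)
    (B : ℝ → Matrix (Fin nx) (Fin nd) ℝ)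
    (CI : ℝ → Matrix (Fin nI) (Fin nx) ℝ)
    (DI : ℝ → Matrix (Fin nI) (Fin nd) ℝ)
    (CE : ℝ → Matrix (Fin nE) (Fin nx) ℝ)
    (hA : ∀ i j, ContinuousOn (fun t => A t i j) (Icc 0 T))
    (hB : ∀ i j, ContinuousOn (fun t => B t i j) (Icc 0 T))
    (hCI : ∀ i j, ContinuousOn (fun t => CI t i j) (Icc 0 T))
    (hDI : ∀ i j, ContinuousOn (fun t => DI t i j) (Icc 0 T))
    (hCE : ∀ i j, ContinuousOn (fun t => CE t i j) (Icc 0 T))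
    (γ : ℝ) (hγ : 0 < γ)
    -- R(t) ≺ 0 on [0,T]
    (hR : ∀ t ∈ Icc (0:ℝ) T, ∀ v : Fin nd → ℝ, v ≠ 0 →
      v ⬝ᵥ (((DI t)ᵀ * DI t - γ ^ 2 • (1 : Matrix (Fin nd) (Fin nd) ℝ)) *ᵥ v) < 0)
    -- continuously differentiable symmetric P solving the RDE with P(T) = F
    (P P' : ℝ → Matrix (Fin nx) (Fin nx) ℝ)
    (hPsym : ∀ t ∈ Icc (0:ℝ) T, (P t)ᵀ = P t)
    (hPderiv : ∀ t ∈ Icc (0:ℝ) T, ∀ i j, HasDerivAt (fun s => P s i j) (P' t i j) t)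
    (hP'cont : ∀ i j, ContinuousOn (fun t => P' t i j) (Icc 0 T))
    (hPT : P T = (CE T)ᵀ * CE T)
    (hRDE : ∀ t ∈ Icc (0:ℝ) T,
      P' t + (A t)ᵀ * P t + P t * A t + (CI t)ᵀ * CI t -
        (P t * B t + (CI t)ᵀ * DI t) *
          ((DI t)ᵀ * DI t - γ ^ 2 • (1 : Matrix (Fin nd) (Fin nd) ℝ))⁻¹ *
        (P t * B t + (CI t)ᵀ * DI t)ᵀ = 0) :
    ∀ (d : ℝ → Fin nd → ℝ) (x : ℝ → Fin nx → ℝ),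
      (∀ i, ContinuousOn (fun t => d t i) (Icc 0 T)) →
      x 0 = 0 →
      (∀ t ∈ Icc (0:ℝ) T, ∀ i,
        HasDerivAt (fun s => x s i) ((A t *ᵥ x t + B t *ᵥ d t) i) t) →
      (CE T *ᵥ x T) ⬝ᵥ (CE T *ᵥ x T) +
        (∫ t in (0:ℝ)..T,
          (CI t *ᵥ x t + DI t *ᵥ d t) ⬝ᵥ (CI t *ᵥ x t + DI t *ᵥ d t)) ≤
      γ ^ 2 * ∫ t in (0:ℝ)..T, (d t) ⬝ᵥ (d t) :=
  RDE_implies_finite_horizon_performance_general hT A B CI DI CE hCI hDI γ hR P P' hPsym hPderiv hPT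
    hRDE
end

section
/- Let Ψ_v be the filter x_v'(t)=A₁(t)x_v(t)+B₁(t)v(t), z_v(t)=C₁(t)x_v(t)+D₁(t)v(t) and Ψ_w the filter x_w'(t)=A₂(t)x_w(t)+B₂(t)w(t), z_w(t)=C₂(t)x_w(t)+D₂(t)w(t) on [0,T], with continuous coefficients and D₁(t), D₂(t) of full column rank. Let M_v:[0,T]→S^{n_{z_v}} and M_w:[0,T]→S^{n_{z_w}} be continuous and positive definite for all t. Let X_v be a continuously differentiable solution of X_v'+A₁ᵀX_v+X_vA₁+C₁ᵀM_vC₁−(X_vB₁+C₁ᵀM_vD₁)(D₁ᵀM_vD₁)⁻¹(X_vB₁+C₁ᵀM_vD₁)ᵀ=0 with X_v(T)=0, and X_w the analogous solution for (A₂,B₂,C₂,D₂,M_w) with X_w(T)=0; let W_v, W_w be continuous with W_vᵀW_v=D₁ᵀM_vD₁, W_wᵀW_w=D₂ᵀM_wD₂, and define ṽ(t):=W_v(t)⁻ᵀ(B₁(t)ᵀX_v(t)+D₁(t)ᵀM_v(t)C₁(t))x_v(t)+W_v(t)v(t) and w̃(t):=W_w(t)⁻ᵀ(B₂(t)ᵀX_w(t)+D₂(t)ᵀM_w(t)C₂(t))x_w(t)+W_w(t)w(t).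 Then for all continuous inputs v, w with x_v(0)=0 and x_w(0)=0: ∫₀ᵀ ( z_v(t)ᵀM_v(t)z_v(t) − z_w(t)ᵀM_w(t)z_w(t) ) dt = ∫₀ᵀ ( ‖ṽ(t)‖² − ‖w̃(t)‖² ) dt. In particular, if the IQC ∫₀ᵀ z(t)ᵀM(t)z(t) dt ≥ 0 holds for z:=(z_v,z_w) and M:=diag(M_v, −M_w), then ∫₀ᵀ(‖ṽ(t)‖² − ‖w̃(t)‖²) dt ≥ 0, i.e., the factored pair (U, diag(I_{n_v}, −I_{n_w})) also defines a valid time-domain integral quadratic constraint. -/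
open Matrix Set

/-!
Write `z = C x + D v` and `L = Bᵀ X + Dᵀ M C`. Since `Wᵀ W = Dᵀ M D` and the Riccati equation
says `X' + Aᵀ X + X A + Cᵀ M C = Lᵀ (Dᵀ M D)⁻¹ L`, completing the square gives, pointwise along
the filter trajectory,
  `‖W⁻ᵀ L x + W v‖² = zᵀ M z + d/dt (xᵀ X x)`.
The storage term `xᵀ X x` vanishes at both ends (`x 0 = 0`, `X T = 0`), so the two supply rates
have the same integral over `[0, T]`; subtracting the identities of the two filters gives the
theorem. `W` is invertible because `Dᵀ M D` is positive definite, `D` having full column rank.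
-/

section Algebra
variable {R : Type*} [CommRing R] {l m n p : Type*} [Fintype l] [Fintype m] [Fintype n] [Fintype p]

theorem Matrix.mulVec_dotProduct_mulVec_s9 (P : Matrix l m R) (Q : Matrix l n R) (u : m → R)
    (w : n → R) : (P *ᵥ u) ⬝ᵥ (Q *ᵥ w) = u ⬝ᵥ ((Pᵀ * Q) *ᵥ w) := by
  rw [← mulVec_mulVec, dotProduct_mulVec u, vecMul_transpose, dotProduct_mulVec]

theorem dotProduct_self_transpose_inv_mulVec_add_mulVec [DecidableEq m] {W : Matrix m m R}
    (hW : IsUnit W.det) (y v : m → R) :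
    (Wᵀ⁻¹ *ᵥ y + W *ᵥ v) ⬝ᵥ (Wᵀ⁻¹ *ᵥ y + W *ᵥ v) =
      y ⬝ᵥ ((Wᵀ * W)⁻¹ *ᵥ y) + 2 * (v ⬝ᵥ y) + v ⬝ᵥ ((Wᵀ * W) *ᵥ v) := by
  have hWt : IsUnit Wᵀ.det := by rwa [det_transpose]
  simp only [dotProduct_add, add_dotProduct, mulVec_dotProduct_mulVec_s9, transpose_nonsing_inv,
    transpose_transpose, nonsing_inv_mul _ hW, mul_nonsing_inv _ hWt, one_mulVec,
    ← Matrix.mul_inv_rev]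
  rw [dotProduct_comm y v]
  ring

theorem riccati_completion_of_squares [DecidableEq m] {A : Matrix n n R} {B : Matrix n m R}
    {C : Matrix p n R} {D : Matrix p m R} {M : Matrix p p R} {X X' : Matrix n n R}
    {W : Matrix m m R} (hM : Mᵀ = M) (hX : Xᵀ = X)
    (hRDE : X' + Aᵀ * X + X * A + Cᵀ * M * C -
      (X * B + Cᵀ * M * D) * (Dᵀ * M * D)⁻¹ * (X * B + Cᵀ * M * D)ᵀ = 0)
    (hW : Wᵀ * W = Dᵀ * M * D) (hWdet : IsUnit W.det) (x : n → R) (v : m → R) :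
    (Wᵀ⁻¹ *ᵥ ((Bᵀ * X + Dᵀ * M * C) *ᵥ x) + W *ᵥ v) ⬝ᵥ
        (Wᵀ⁻¹ *ᵥ ((Bᵀ * X + Dᵀ * M * C) *ᵥ x) + W *ᵥ v) =
      (C *ᵥ x + D *ᵥ v) ⬝ᵥ (M *ᵥ (C *ᵥ x + D *ᵥ v)) +
        ((A *ᵥ x + B *ᵥ v) ⬝ᵥ (X *ᵥ x) + x ⬝ᵥ (X' *ᵥ x + X *ᵥ (A *ᵥ x + B *ᵥ v))) := by
  rw [dotProduct_self_transpose_inv_mulVec_add_mulVec hWdet, hW]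
  have hL : (Bᵀ * X + Dᵀ * M * C)ᵀ = X * B + Cᵀ * M * D := by
    simp [transpose_add, transpose_mul, hM, hX, Matrix.mul_assoc]
  have hQuad : X' + Aᵀ * X + X * A + Cᵀ * M * C =
      (Bᵀ * X + Dᵀ * M * C)ᵀ * (Dᵀ * M * D)⁻¹ * (Bᵀ * X + Dᵀ * M * C) := by
    rw [sub_eq_zero.mp hRDE, ← hL, transpose_transpose]
  rw [mulVec_dotProduct_mulVec_s9, mulVec_mulVec, ← hQuad]
  simp only [add_mulVec, mulVec_add, dotProduct_add, add_dotProduct, ← mulVec_mulVec,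
    dotProduct_mulVec _ (_ᵀ), vecMul_transpose]
  rw [← dotProduct_transpose_mulVec M (D *ᵥ v) (C *ᵥ x), hM,
    ← dotProduct_transpose_mulVec X (B *ᵥ v) x, hX]
  ring

theorem isUnit_det_of_transpose_mul_self_eq {K : Type*} [Field K] [PartialOrder K]
    [DecidableEq m] {D : Matrix p m K} {M : Matrix p p K} {W : Matrix m m K}
    (hD : ∀ u, D *ᵥ u = 0 → u = 0) (hM : ∀ z, z ≠ 0 → 0 < z ⬝ᵥ (M *ᵥ z))
    (hW : Wᵀ * W = Dᵀ * M * D) : IsUnit W.det := by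
  rw [isUnit_iff_ne_zero]
  intro hdet
  obtain ⟨u, hu, hWu⟩ := exists_mulVec_eq_zero_iff.mpr hdet
  have hzero : (D *ᵥ u) ⬝ᵥ (M *ᵥ (D *ᵥ u)) = 0 :=
    calc (D *ᵥ u) ⬝ᵥ (M *ᵥ (D *ᵥ u)) = u ⬝ᵥ ((Dᵀ * M * D) *ᵥ u) := by
          rw [mulVec_dotProduct_mulVec_s9, mulVec_mulVec]
      _ = (W *ᵥ u) ⬝ᵥ (W *ᵥ u) := by rw [← hW, mulVec_dotProduct_mulVec_s9]
      _ = 0 := by rw [hWu, zero_dotProduct]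
  exact (hM _ fun h => hu (hD u h)).ne' hzero

end Algebra

section Calculus
variable {𝕜 : Type*} [NontriviallyNormedField 𝕜] {m n : Type*} [Fintype n] {t : 𝕜}

theorem hasDerivAt_dotProduct {u w : 𝕜 → n → 𝕜} {u' w' : n → 𝕜}
    (hu : ∀ i, HasDerivAt (fun s => u s i) (u' i) t)
    (hw : ∀ i, HasDerivAt (fun s => w s i) (w' i) t) :
    HasDerivAt (fun s => u s ⬝ᵥ w s) (u' ⬝ᵥ w t + u t ⬝ᵥ w') t := by
  simpa only [dotProduct, ← Finset.sum_add_distrib] using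
    HasDerivAt.fun_sum (u := Finset.univ) fun i _ => (hu i).fun_mul (hw i)

theorem hasDerivAt_mulVec_apply {X : 𝕜 → Matrix m n 𝕜} {X' : Matrix m n 𝕜} {x : 𝕜 → n → 𝕜}
    {x' : n → 𝕜} (hX : ∀ i j, HasDerivAt (fun s => X s i j) (X' i j) t)
    (hx : ∀ j, HasDerivAt (fun s => x s j) (x' j) t) (i : m) :
    HasDerivAt (fun s => (X s *ᵥ x s) i) ((X' *ᵥ x t + X t *ᵥ x') i) t :=
  hasDerivAt_dotProduct (hX i) hx

theorem hasDerivAt_dotProduct_mulVec {X : 𝕜 → Matrix n n 𝕜} {X' : Matrix n n 𝕜}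
    {x : 𝕜 → n → 𝕜} {x' : n → 𝕜} (hX : ∀ i j, HasDerivAt (fun s => X s i j) (X' i j) t)
    (hx : ∀ j, HasDerivAt (fun s => x s j) (x' j) t) :
    HasDerivAt (fun s => x s ⬝ᵥ (X s *ᵥ x s))
      (x' ⬝ᵥ (X t *ᵥ x t) + x t ⬝ᵥ (X' *ᵥ x t + X t *ᵥ x')) t :=
  hasDerivAt_dotProduct hx (hasDerivAt_mulVec_apply hX hx)

end Calculus

section TimeVaryingFilter
variable {n m p : Type*} [Fintype n] [Fintype m] [Fintype p]

theorem continuousOn_supply {s : Set ℝ} {C : ℝ → Matrix p n ℝ} {D : ℝ → Matrix p m ℝ}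
    {M : ℝ → Matrix p p ℝ} {x : ℝ → n → ℝ} {v : ℝ → m → ℝ}
    (hC : ∀ i j, ContinuousOn (fun t => C t i j) s) (hD : ∀ i j, ContinuousOn (fun t => D t i j) s)
    (hM : ∀ i j, ContinuousOn (fun t => M t i j) s) (hx : ∀ i, ContinuousOn (fun t => x t i) s)
    (hv : ∀ i, ContinuousOn (fun t => v t i) s) :
    ContinuousOn (fun t => (C t *ᵥ x t + D t *ᵥ v t) ⬝ᵥ (M t *ᵥ (C t *ᵥ x t + D t *ᵥ v t))) s := by
  simp only [dotProduct, mulVec, Pi.add_apply]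
  fun_prop

theorem integral_factored_sq_eq_integral_supply [DecidableEq m] {T : ℝ} (hT : 0 ≤ T)
    {A : ℝ → Matrix n n ℝ} {B : ℝ → Matrix n m ℝ} {C : ℝ → Matrix p n ℝ}
    {D : ℝ → Matrix p m ℝ} {M : ℝ → Matrix p p ℝ} {X X' : ℝ → Matrix n n ℝ}
    {W : ℝ → Matrix m m ℝ} {v : ℝ → m → ℝ} {x : ℝ → n → ℝ}
    (hA : ∀ i j, ContinuousOn (fun t => A t i j) (Icc 0 T))
    (hB : ∀ i j, ContinuousOn (fun t => B t i j) (Icc 0 T))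
    (hC : ∀ i j, ContinuousOn (fun t => C t i j) (Icc 0 T))
    (hD : ∀ i j, ContinuousOn (fun t => D t i j) (Icc 0 T))
    (hDrank : ∀ t ∈ Icc (0:ℝ) T, ∀ u : m → ℝ, D t *ᵥ u = 0 → u = 0)
    (hMc : ∀ i j, ContinuousOn (fun t => M t i j) (Icc 0 T))
    (hMsym : ∀ t ∈ Icc (0:ℝ) T, (M t)ᵀ = M t)
    (hMpd : ∀ t ∈ Icc (0:ℝ) T, ∀ z : p → ℝ, z ≠ 0 → 0 < z ⬝ᵥ (M t *ᵥ z))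
    (hXsym : ∀ t ∈ Icc (0:ℝ) T, (X t)ᵀ = X t)
    (hXd : ∀ t ∈ Icc (0:ℝ) T, ∀ i j, HasDerivAt (fun s => X s i j) (X' t i j) t)
    (hX'c : ∀ i j, ContinuousOn (fun t => X' t i j) (Icc 0 T)) (hXT : X T = 0)
    (hRDE : ∀ t ∈ Icc (0:ℝ) T,
      X' t + (A t)ᵀ * X t + X t * A t + (C t)ᵀ * M t * C t -
        (X t * B t + (C t)ᵀ * M t * D t) * ((D t)ᵀ * M t * D t)⁻¹ *
          (X t * B t + (C t)ᵀ * M t * D t)ᵀ = 0)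
    (hW : ∀ t ∈ Icc (0:ℝ) T, (W t)ᵀ * W t = (D t)ᵀ * M t * D t)
    (hv : ∀ i, ContinuousOn (fun t => v t i) (Icc 0 T)) (hx0 : x 0 = 0)
    (hxd : ∀ t ∈ Icc (0:ℝ) T, ∀ i,
      HasDerivAt (fun s => x s i) ((A t *ᵥ x t + B t *ᵥ v t) i) t) :
    IntervalIntegrable (fun t =>
      (((W t)ᵀ)⁻¹ *ᵥ (((B t)ᵀ * X t + (D t)ᵀ * M t * C t) *ᵥ x t) + W t *ᵥ v t) ⬝ᵥ
        (((W t)ᵀ)⁻¹ *ᵥ (((B t)ᵀ * X t + (D t)ᵀ * M t * C t) *ᵥ x t) + W t *ᵥ v t))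
      MeasureTheory.volume 0 T ∧
    ∫ t in (0:ℝ)..T,
      ((((W t)ᵀ)⁻¹ *ᵥ (((B t)ᵀ * X t + (D t)ᵀ * M t * C t) *ᵥ x t) + W t *ᵥ v t) ⬝ᵥ
        (((W t)ᵀ)⁻¹ *ᵥ (((B t)ᵀ * X t + (D t)ᵀ * M t * C t) *ᵥ x t) + W t *ᵥ v t)) =
      ∫ t in (0:ℝ)..T, (C t *ᵥ x t + D t *ᵥ v t) ⬝ᵥ (M t *ᵥ (C t *ᵥ x t + D t *ᵥ v t)) := by
  set z := fun t => (C t *ᵥ x t + D t *ᵥ v t) ⬝ᵥ (M t *ᵥ (C t *ᵥ x t + D t *ᵥ v t))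
  set g := fun t => (A t *ᵥ x t + B t *ᵥ v t) ⬝ᵥ (X t *ᵥ x t) +
    x t ⬝ᵥ (X' t *ᵥ x t + X t *ᵥ (A t *ᵥ x t + B t *ᵥ v t))
  have hIcc : uIcc 0 T = Icc 0 T := uIcc_of_le hT
  have hxc : ∀ i, ContinuousOn (fun t => x t i) (Icc 0 T) := fun i =>
    HasDerivAt.continuousOn fun t ht => hxd t ht i
  have hXc : ∀ i j, ContinuousOn (fun t => X t i j) (Icc 0 T) := fun i j =>
    HasDerivAt.continuousOn fun t ht => hXd t ht i j
  have hg : ContinuousOn g (Icc 0 T) := by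
    simp only [g, dotProduct, mulVec, Pi.add_apply]
    fun_prop
  have hz : ContinuousOn z (Icc 0 T) := continuousOn_supply hC hD hMc hxc hv
  have hgint : ∫ t in (0:ℝ)..T, g t = 0 := by
    rw [intervalIntegral.integral_eq_sub_of_hasDerivAt (fun t ht => hasDerivAt_dotProduct_mulVec
      (hXd t (hIcc ▸ ht)) (hxd t (hIcc ▸ ht))) (hg.intervalIntegrable_of_Icc hT), hXT, hx0]
    simp
  have of_eqOn : ∀ f : ℝ → ℝ, EqOn f (fun t => z t + g t) (Icc 0 T) →
      IntervalIntegrable f MeasureTheory.volume 0 T ∧ ∫ t in (0:ℝ)..T, f t = ∫ t in (0:ℝ)..T, z t :=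
    fun f hfg => ⟨((hz.add hg).congr hfg).intervalIntegrable_of_Icc hT, by
      rw [intervalIntegral.integral_congr (hIcc ▸ hfg), intervalIntegral.integral_add
        (hz.intervalIntegrable_of_Icc hT) (hg.intervalIntegrable_of_Icc hT), hgint, add_zero]⟩
  refine of_eqOn _ fun t ht => ?_
  rw [riccati_completion_of_squares (hMsym t ht) (hXsym t ht) (hRDE t ht) (hW t ht)
    (isUnit_det_of_transpose_mul_self_eq (hDrank t ht) (hMpd t ht) (hW t ht))]

end TimeVaryingFilter

theorem iqc_factorization_identity_general
    {n1 n2 nv nw nzv nzw : ℕ} {T : ℝ} (hT : 0 < T)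
    (A1 : ℝ → Matrix (Fin n1) (Fin n1) ℝ) (B1 : ℝ → Matrix (Fin n1) (Fin nv) ℝ)
    (C1 : ℝ → Matrix (Fin nzv) (Fin n1) ℝ) (D1 : ℝ → Matrix (Fin nzv) (Fin nv) ℝ)
    (A2 : ℝ → Matrix (Fin n2) (Fin n2) ℝ) (B2 : ℝ → Matrix (Fin n2) (Fin nw) ℝ)
    (C2 : ℝ → Matrix (Fin nzw) (Fin n2) ℝ) (D2 : ℝ → Matrix (Fin nzw) (Fin nw) ℝ)
    (hA1 : ∀ i j, ContinuousOn (fun t => A1 t i j) (Icc 0 T))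
    (hB1 : ∀ i j, ContinuousOn (fun t => B1 t i j) (Icc 0 T))
    (hC1 : ∀ i j, ContinuousOn (fun t => C1 t i j) (Icc 0 T))
    (hD1 : ∀ i j, ContinuousOn (fun t => D1 t i j) (Icc 0 T))
    (hA2 : ∀ i j, ContinuousOn (fun t => A2 t i j) (Icc 0 T))
    (hB2 : ∀ i j, ContinuousOn (fun t => B2 t i j) (Icc 0 T))
    (hC2 : ∀ i j, ContinuousOn (fun t => C2 t i j) (Icc 0 T))
    (hD2 : ∀ i j, ContinuousOn (fun t => D2 t i j) (Icc 0 T))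
    (hD1rank : ∀ t ∈ Icc (0:ℝ) T, ∀ v : Fin nv → ℝ, D1 t *ᵥ v = 0 → v = 0)
    (hD2rank : ∀ t ∈ Icc (0:ℝ) T, ∀ v : Fin nw → ℝ, D2 t *ᵥ v = 0 → v = 0)
    (Mv : ℝ → Matrix (Fin nzv) (Fin nzv) ℝ) (Mw : ℝ → Matrix (Fin nzw) (Fin nzw) ℝ)
    (hMvcont : ∀ i j, ContinuousOn (fun t => Mv t i j) (Icc 0 T))
    (hMwcont : ∀ i j, ContinuousOn (fun t => Mw t i j) (Icc 0 T))
    (hMvsym : ∀ t ∈ Icc (0:ℝ) T, (Mv t)ᵀ = Mv t)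
    (hMwsym : ∀ t ∈ Icc (0:ℝ) T, (Mw t)ᵀ = Mw t)
    (hMvpd : ∀ t ∈ Icc (0:ℝ) T, ∀ v : Fin nzv → ℝ, v ≠ 0 → 0 < v ⬝ᵥ (Mv t *ᵥ v))
    (hMwpd : ∀ t ∈ Icc (0:ℝ) T, ∀ v : Fin nzw → ℝ, v ≠ 0 → 0 < v ⬝ᵥ (Mw t *ᵥ v))
    -- Riccati solutions for the two factorizations
    (Xv Xv' : ℝ → Matrix (Fin n1) (Fin n1) ℝ)
    (hXvsym : ∀ t ∈ Icc (0:ℝ) T, (Xv t)ᵀ = Xv t)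
    (hXvderiv : ∀ t ∈ Icc (0:ℝ) T, ∀ i j, HasDerivAt (fun s => Xv s i j) (Xv' t i j) t)
    (hXv'cont : ∀ i j, ContinuousOn (fun t => Xv' t i j) (Icc 0 T))
    (hXvT : Xv T = 0)
    (hXvRDE : ∀ t ∈ Icc (0:ℝ) T,
      Xv' t + (A1 t)ᵀ * Xv t + Xv t * A1 t + (C1 t)ᵀ * Mv t * C1 t -
        (Xv t * B1 t + (C1 t)ᵀ * Mv t * D1 t) * ((D1 t)ᵀ * Mv t * D1 t)⁻¹ *
          (Xv t * B1 t + (C1 t)ᵀ * Mv t * D1 t)ᵀ = 0)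
    (Xw Xw' : ℝ → Matrix (Fin n2) (Fin n2) ℝ)
    (hXwsym : ∀ t ∈ Icc (0:ℝ) T, (Xw t)ᵀ = Xw t)
    (hXwderiv : ∀ t ∈ Icc (0:ℝ) T, ∀ i j, HasDerivAt (fun s => Xw s i j) (Xw' t i j) t)
    (hXw'cont : ∀ i j, ContinuousOn (fun t => Xw' t i j) (Icc 0 T))
    (hXwT : Xw T = 0)
    (hXwRDE : ∀ t ∈ Icc (0:ℝ) T,
      Xw' t + (A2 t)ᵀ * Xw t + Xw t * A2 t + (C2 t)ᵀ * Mw t * C2 t -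
        (Xw t * B2 t + (C2 t)ᵀ * Mw t * D2 t) * ((D2 t)ᵀ * Mw t * D2 t)⁻¹ *
          (Xw t * B2 t + (C2 t)ᵀ * Mw t * D2 t)ᵀ = 0)
    -- square root factors
    (Wv : ℝ → Matrix (Fin nv) (Fin nv) ℝ) (Ww : ℝ → Matrix (Fin nw) (Fin nw) ℝ)
    (hWv : ∀ t ∈ Icc (0:ℝ) T, (Wv t)ᵀ * Wv t = (D1 t)ᵀ * Mv t * D1 t)
    (hWw : ∀ t ∈ Icc (0:ℝ) T, (Ww t)ᵀ * Ww t = (D2 t)ᵀ * Mw t * D2 t) :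
    ∀ (v : ℝ → Fin nv → ℝ) (w : ℝ → Fin nw → ℝ)
      (xv : ℝ → Fin n1 → ℝ) (xw : ℝ → Fin n2 → ℝ),
      (∀ i, ContinuousOn (fun t => v t i) (Icc 0 T)) →
      (∀ i, ContinuousOn (fun t => w t i) (Icc 0 T)) →
      xv 0 = 0 → xw 0 = 0 →
      (∀ t ∈ Icc (0:ℝ) T, ∀ i,
        HasDerivAt (fun s => xv s i) ((A1 t *ᵥ xv t + B1 t *ᵥ v t) i) t) →
      (∀ t ∈ Icc (0:ℝ) T, ∀ i,
        HasDerivAt (fun s => xw s i) ((A2 t *ᵥ xw t + B2 t *ᵥ w t) i) t) →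
      ((∫ t in (0:ℝ)..T,
          ((C1 t *ᵥ xv t + D1 t *ᵥ v t) ⬝ᵥ (Mv t *ᵥ (C1 t *ᵥ xv t + D1 t *ᵥ v t)) -
           (C2 t *ᵥ xw t + D2 t *ᵥ w t) ⬝ᵥ (Mw t *ᵥ (C2 t *ᵥ xw t + D2 t *ᵥ w t)))) =
        ∫ t in (0:ℝ)..T,
          ((((Wv t)ᵀ)⁻¹ *ᵥ (((B1 t)ᵀ * Xv t + (D1 t)ᵀ * Mv t * C1 t) *ᵥ xv t) +
              Wv t *ᵥ v t) ⬝ᵥ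
           (((Wv t)ᵀ)⁻¹ *ᵥ (((B1 t)ᵀ * Xv t + (D1 t)ᵀ * Mv t * C1 t) *ᵥ xv t) +
              Wv t *ᵥ v t) -
           (((Ww t)ᵀ)⁻¹ *ᵥ (((B2 t)ᵀ * Xw t + (D2 t)ᵀ * Mw t * C2 t) *ᵥ xw t) +
              Ww t *ᵥ w t) ⬝ᵥ
           (((Ww t)ᵀ)⁻¹ *ᵥ (((B2 t)ᵀ * Xw t + (D2 t)ᵀ * Mw t * C2 t) *ᵥ xw t) +
              Ww t *ᵥ w t))) ∧
      ((0 ≤ ∫ t in (0:ℝ)..T,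
          ((C1 t *ᵥ xv t + D1 t *ᵥ v t) ⬝ᵥ (Mv t *ᵥ (C1 t *ᵥ xv t + D1 t *ᵥ v t)) -
           (C2 t *ᵥ xw t + D2 t *ᵥ w t) ⬝ᵥ (Mw t *ᵥ (C2 t *ᵥ xw t + D2 t *ᵥ w t)))) →
        0 ≤ ∫ t in (0:ℝ)..T,
          ((((Wv t)ᵀ)⁻¹ *ᵥ (((B1 t)ᵀ * Xv t + (D1 t)ᵀ * Mv t * C1 t) *ᵥ xv t) +
              Wv t *ᵥ v t) ⬝ᵥ
           (((Wv t)ᵀ)⁻¹ *ᵥ (((B1 t)ᵀ * Xv t + (D1 t)ᵀ * Mv t * C1 t) *ᵥ xv t) +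
              Wv t *ᵥ v t) -
           (((Ww t)ᵀ)⁻¹ *ᵥ (((B2 t)ᵀ * Xw t + (D2 t)ᵀ * Mw t * C2 t) *ᵥ xw t) +
              Ww t *ᵥ w t) ⬝ᵥ
           (((Ww t)ᵀ)⁻¹ *ᵥ (((B2 t)ᵀ * Xw t + (D2 t)ᵀ * Mw t * C2 t) *ᵥ xw t) +
              Ww t *ᵥ w t))) := by
  intro v w xv xw hv hw hxv0 hxw0 hxvd hxwd
  obtain ⟨hIv, hv_eq⟩ := integral_factored_sq_eq_integral_supply hT.le hA1 hB1 hC1 hD1 hD1rank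
    hMvcont hMvsym hMvpd hXvsym hXvderiv hXv'cont hXvT hXvRDE hWv hv hxv0 hxvd
  obtain ⟨hIw, hw_eq⟩ := integral_factored_sq_eq_integral_supply hT.le hA2 hB2 hC2 hD2 hD2rank
    hMwcont hMwsym hMwpd hXwsym hXwderiv hXw'cont hXwT hXwRDE hWw hw hxw0 hxwd
  have hzv := continuousOn_supply hC1 hD1 hMvcont
    (fun i => HasDerivAt.continuousOn fun t ht => hxvd t ht i) hv
  have hzw := continuousOn_supply hC2 hD2 hMwcont
    (fun i => HasDerivAt.continuousOn fun t ht => hxwd t ht i) hw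
  refine (fun key => ⟨key, fun h => h.trans_eq key⟩) ?_
  rw [intervalIntegral.integral_sub (hzv.intervalIntegrable_of_Icc hT.le)
    (hzw.intervalIntegrable_of_Icc hT.le), intervalIntegral.integral_sub hIv hIw, hv_eq, hw_eq]

/-- time-varying factorization of a block-diagonal IQC:
`∫ (z_vᵀM_v z_v - z_wᵀM_w z_w) dt = ∫ (‖ṽ‖² - ‖w̃‖²) dt` for zero initial filter
states; in particular a valid IQC for `(Ψ, diag(M_v,-M_w))` yields a valid IQC for
the factored pair `(U, diag(I,-I))`. -/
theorem iqc_factorization_identity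
    {n1 n2 nv nw nzv nzw : ℕ} {T : ℝ} (hT : 0 < T)
    (A1 : ℝ → Matrix (Fin n1) (Fin n1) ℝ) (B1 : ℝ → Matrix (Fin n1) (Fin nv) ℝ)
    (C1 : ℝ → Matrix (Fin nzv) (Fin n1) ℝ) (D1 : ℝ → Matrix (Fin nzv) (Fin nv) ℝ)
    (A2 : ℝ → Matrix (Fin n2) (Fin n2) ℝ) (B2 : ℝ → Matrix (Fin n2) (Fin nw) ℝ)
    (C2 : ℝ → Matrix (Fin nzw) (Fin n2) ℝ) (D2 : ℝ → Matrix (Fin nzw) (Fin nw) ℝ)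
    (hA1 : ∀ i j, ContinuousOn (fun t => A1 t i j) (Icc 0 T))
    (hB1 : ∀ i j, ContinuousOn (fun t => B1 t i j) (Icc 0 T))
    (hC1 : ∀ i j, ContinuousOn (fun t => C1 t i j) (Icc 0 T))
    (hD1 : ∀ i j, ContinuousOn (fun t => D1 t i j) (Icc 0 T))
    (hA2 : ∀ i j, ContinuousOn (fun t => A2 t i j) (Icc 0 T))
    (hB2 : ∀ i j, ContinuousOn (fun t => B2 t i j) (Icc 0 T))
    (hC2 : ∀ i j, ContinuousOn (fun t => C2 t i j) (Icc 0 T))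
    (hD2 : ∀ i j, ContinuousOn (fun t => D2 t i j) (Icc 0 T))
    (hD1rank : ∀ t ∈ Icc (0:ℝ) T, ∀ v : Fin nv → ℝ, D1 t *ᵥ v = 0 → v = 0)
    (hD2rank : ∀ t ∈ Icc (0:ℝ) T, ∀ v : Fin nw → ℝ, D2 t *ᵥ v = 0 → v = 0)
    (Mv : ℝ → Matrix (Fin nzv) (Fin nzv) ℝ) (Mw : ℝ → Matrix (Fin nzw) (Fin nzw) ℝ)
    (hMvcont : ∀ i j, ContinuousOn (fun t => Mv t i j) (Icc 0 T))
    (hMwcont : ∀ i j, ContinuousOn (fun t => Mw t i j) (Icc 0 T))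
    (hMvsym : ∀ t ∈ Icc (0:ℝ) T, (Mv t)ᵀ = Mv t)
    (hMwsym : ∀ t ∈ Icc (0:ℝ) T, (Mw t)ᵀ = Mw t)
    (hMvpd : ∀ t ∈ Icc (0:ℝ) T, ∀ v : Fin nzv → ℝ, v ≠ 0 → 0 < v ⬝ᵥ (Mv t *ᵥ v))
    (hMwpd : ∀ t ∈ Icc (0:ℝ) T, ∀ v : Fin nzw → ℝ, v ≠ 0 → 0 < v ⬝ᵥ (Mw t *ᵥ v))
    -- Riccati solutions for the two factorizations
    (Xv Xv' : ℝ → Matrix (Fin n1) (Fin n1) ℝ)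
    (hXvsym : ∀ t ∈ Icc (0:ℝ) T, (Xv t)ᵀ = Xv t)
    (hXvderiv : ∀ t ∈ Icc (0:ℝ) T, ∀ i j, HasDerivAt (fun s => Xv s i j) (Xv' t i j) t)
    (hXv'cont : ∀ i j, ContinuousOn (fun t => Xv' t i j) (Icc 0 T))
    (hXvT : Xv T = 0)
    (hXvRDE : ∀ t ∈ Icc (0:ℝ) T,
      Xv' t + (A1 t)ᵀ * Xv t + Xv t * A1 t + (C1 t)ᵀ * Mv t * C1 t -
        (Xv t * B1 t + (C1 t)ᵀ * Mv t * D1 t) * ((D1 t)ᵀ * Mv t * D1 t)⁻¹ *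
          (Xv t * B1 t + (C1 t)ᵀ * Mv t * D1 t)ᵀ = 0)
    (Xw Xw' : ℝ → Matrix (Fin n2) (Fin n2) ℝ)
    (hXwsym : ∀ t ∈ Icc (0:ℝ) T, (Xw t)ᵀ = Xw t)
    (hXwderiv : ∀ t ∈ Icc (0:ℝ) T, ∀ i j, HasDerivAt (fun s => Xw s i j) (Xw' t i j) t)
    (hXw'cont : ∀ i j, ContinuousOn (fun t => Xw' t i j) (Icc 0 T))
    (hXwT : Xw T = 0)
    (hXwRDE : ∀ t ∈ Icc (0:ℝ) T,
      Xw' t + (A2 t)ᵀ * Xw t + Xw t * A2 t + (C2 t)ᵀ * Mw t * C2 t -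
        (Xw t * B2 t + (C2 t)ᵀ * Mw t * D2 t) * ((D2 t)ᵀ * Mw t * D2 t)⁻¹ *
          (Xw t * B2 t + (C2 t)ᵀ * Mw t * D2 t)ᵀ = 0)
    -- square root factors
    (Wv : ℝ → Matrix (Fin nv) (Fin nv) ℝ) (Ww : ℝ → Matrix (Fin nw) (Fin nw) ℝ)
    (hWvcont : ∀ i j, ContinuousOn (fun t => Wv t i j) (Icc 0 T))
    (hWwcont : ∀ i j, ContinuousOn (fun t => Ww t i j) (Icc 0 T))
    (hWv : ∀ t ∈ Icc (0:ℝ) T, (Wv t)ᵀ * Wv t = (D1 t)ᵀ * Mv t * D1 t)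
    (hWw : ∀ t ∈ Icc (0:ℝ) T, (Ww t)ᵀ * Ww t = (D2 t)ᵀ * Mw t * D2 t) :
    ∀ (v : ℝ → Fin nv → ℝ) (w : ℝ → Fin nw → ℝ)
      (xv : ℝ → Fin n1 → ℝ) (xw : ℝ → Fin n2 → ℝ),
      (∀ i, ContinuousOn (fun t => v t i) (Icc 0 T)) →
      (∀ i, ContinuousOn (fun t => w t i) (Icc 0 T)) →
      xv 0 = 0 → xw 0 = 0 →
      (∀ t ∈ Icc (0:ℝ) T, ∀ i,
        HasDerivAt (fun s => xv s i) ((A1 t *ᵥ xv t + B1 t *ᵥ v t) i) t) →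
      (∀ t ∈ Icc (0:ℝ) T, ∀ i,
        HasDerivAt (fun s => xw s i) ((A2 t *ᵥ xw t + B2 t *ᵥ w t) i) t) →
      ((∫ t in (0:ℝ)..T,
          ((C1 t *ᵥ xv t + D1 t *ᵥ v t) ⬝ᵥ (Mv t *ᵥ (C1 t *ᵥ xv t + D1 t *ᵥ v t)) -
           (C2 t *ᵥ xw t + D2 t *ᵥ w t) ⬝ᵥ (Mw t *ᵥ (C2 t *ᵥ xw t + D2 t *ᵥ w t)))) =
        ∫ t in (0:ℝ)..T,
          ((((Wv t)ᵀ)⁻¹ *ᵥ (((B1 t)ᵀ * Xv t + (D1 t)ᵀ * Mv t * C1 t) *ᵥ xv t) +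
              Wv t *ᵥ v t) ⬝ᵥ
           (((Wv t)ᵀ)⁻¹ *ᵥ (((B1 t)ᵀ * Xv t + (D1 t)ᵀ * Mv t * C1 t) *ᵥ xv t) +
              Wv t *ᵥ v t) -
           (((Ww t)ᵀ)⁻¹ *ᵥ (((B2 t)ᵀ * Xw t + (D2 t)ᵀ * Mw t * C2 t) *ᵥ xw t) +
              Ww t *ᵥ w t) ⬝ᵥ
           (((Ww t)ᵀ)⁻¹ *ᵥ (((B2 t)ᵀ * Xw t + (D2 t)ᵀ * Mw t * C2 t) *ᵥ xw t) +
              Ww t *ᵥ w t))) ∧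
      ((0 ≤ ∫ t in (0:ℝ)..T,
          ((C1 t *ᵥ xv t + D1 t *ᵥ v t) ⬝ᵥ (Mv t *ᵥ (C1 t *ᵥ xv t + D1 t *ᵥ v t)) -
           (C2 t *ᵥ xw t + D2 t *ᵥ w t) ⬝ᵥ (Mw t *ᵥ (C2 t *ᵥ xw t + D2 t *ᵥ w t)))) →
        0 ≤ ∫ t in (0:ℝ)..T,
          ((((Wv t)ᵀ)⁻¹ *ᵥ (((B1 t)ᵀ * Xv t + (D1 t)ᵀ * Mv t * C1 t) *ᵥ xv t) +
              Wv t *ᵥ v t) ⬝ᵥ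
           (((Wv t)ᵀ)⁻¹ *ᵥ (((B1 t)ᵀ * Xv t + (D1 t)ᵀ * Mv t * C1 t) *ᵥ xv t) +
              Wv t *ᵥ v t) -
           (((Ww t)ᵀ)⁻¹ *ᵥ (((B2 t)ᵀ * Xw t + (D2 t)ᵀ * Mw t * C2 t) *ᵥ xw t) +
              Ww t *ᵥ w t) ⬝ᵥ
           (((Ww t)ᵀ)⁻¹ *ᵥ (((B2 t)ᵀ * Xw t + (D2 t)ᵀ * Mw t * C2 t) *ᵥ xw t) +
              Ww t *ᵥ w t))) :=
  iqc_factorization_identity_general hT A1 B1 C1 D1 A2 B2 C2 D2 hA1 hB1 hC1 hD1 hA2 hB2 hC2 hD2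
    hD1rank hD2rank Mv Mw hMvcont hMwcont hMvsym hMwsym hMvpd hMwpd Xv Xv' hXvsym hXvderiv hXv'cont
    hXvT hXvRDE Xw Xw' hXwsym hXwderiv hXw'cont hXwT hXwRDE Wv Ww hWv hWw
end
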